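/- Let d ≥ 1 and work in ℝ^d with a measurable intensity Λ : ℝ^d → [0,∞) satisfying 0 < C := ∫_{ℝ^d} Λ < ∞; write M(ρ) = ∫_{closedBall(s₀,ρ)} Λ for s₀ ∈ ℝ^d, ρ ≥ 0. On a probability space (Ω, P), let N : Ω → ℕ have the Poisson law with mean C and let (x_i)_{i∈ℕ} be random points of ℝ^d, i.i.d. with the probability law having density Λ/C with respect to Lebesgue measure, with N and all the x_i mutually independent. Let (ε_i)_{i∈ℕ} be random vectors in ℝ^d (with no independence assumption) satisfying ‖ε_i(ω)‖ ≤ m for every i and P-almost every ω, for some constant m ≥ 0, and set y_i = x_i + ε_i. Then for every r ≥ 0 and integer k ≥ 1, P( #{ i < N : y_i ∈ closedBall(s₀, r) } ≥ k ) ≤ 1 − ∑_{j=0}^{k−1} exp(−M(r+m)) · M(r+m)^j / j!. -/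

import Mathlib

open MeasureTheory ProbabilityTheory Metric
open scoped Nat

/-- Index family for the mutually independent collection consisting of the total
count `N` (index `none`) and the point locations `x i` (index `some i`). -/
def BddErr.famType (E : Type) : Option ℕ → Type
  | none => ℕ
  | some _ => E

instance BddErr.famType.instMeasurableSpace (E : Type) [MeasurableSpace E] :
    ∀ o, MeasurableSpace (BddErr.famType E o)
  | none => inferInstanceAs (MeasurableSpace ℕ)
  | some _ => inferInstanceAs (MeasurableSpace E)

/-- The combined family of random variables: the count `N` and the locations `x i`. -/
def BddErr.famFun {Ω E : Type} (N : Ω → ℕ) (x : ℕ → Ω → E) : ∀ o, Ω → BddErr.famType E o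
  | none => N
  | some i => x i

/-!
A noisy point `x i + ε i` in `closedBall s₀ r` comes from a true point `x i` in
`B = closedBall s₀ (r + m)`, so the event is almost surely contained in the event that at least
`k` true points lie in `B`. The number of true points in `B` is a Poisson thinning: given `N = n`
it is, by independence, binomial with parameters `n` and `p = P(x i ∈ B) = M / C`, and mixing
these binomials over the Poisson law of `N` gives the Poisson law of mean `C p = M`.
-/

namespace BddErr

open Finset
open scoped ENNReal

theorem hasSum_poisson_mul_binomial (C p : ℝ) (j : ℕ) :
    HasSum (fun n : ℕ => Real.exp (-C) * C ^ n / n ! *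
        (n.choose j * (p ^ j * (1 - p) ^ (n - j))))
      (Real.exp (-(C * p)) * (C * p) ^ j / j !) := by
  have hshift (t : ℕ) : Real.exp (-C) * C ^ (t + j) / (t + j) ! *
      ((t + j).choose j * (p ^ j * (1 - p) ^ (t + j - j))) =
      Real.exp (-C) * (C * p) ^ j / j ! * ((C * (1 - p)) ^ t / t !) := by
    have hchoose : ((t + j).choose j : ℝ) * j ! * t ! = (t + j) ! := by
      exact_mod_cast Nat.add_sub_cancel t j ▸
        Nat.choose_mul_factorial_mul_factorial (Nat.le_add_left j t)
    rw [Nat.add_sub_cancel, pow_add, mul_pow, mul_pow]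
    field_simp
    linear_combination (C ^ t * C ^ j * p ^ j * (1 - p) ^ t) * hchoose
  have hexp : HasSum (fun t : ℕ => (C * (1 - p)) ^ t / t !) (Real.exp (C * (1 - p))) := by
    simpa only [Real.exp_eq_exp_ℝ] using NormedSpace.expSeries_div_hasSum_exp (C * (1 - p))
  -- only `n ≥ j` contribute, and after the shift `n = t + j` the series is a multiple of the
  -- exponential series of `C * (1 - p)`
  rw [← hasSum_nat_add_iff' j, sum_eq_zero fun i hi => by
    simp [Nat.choose_eq_zero_of_lt (mem_range.1 hi)], sub_zero]
  have hvalue : Real.exp (-(C * p)) * (C * p) ^ j / j ! =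
      Real.exp (-C) * (C * p) ^ j / j ! * Real.exp (C * (1 - p)) := by
    rw [show -(C * p) = -C + C * (1 - p) by ring, Real.exp_add]
    ring
  rw [funext hshift, hvalue]
  exact hexp.mul_left _

theorem filter_eq_iff_of_subset {ι : Type*} {s T : Finset ι} {p : ι → Prop} [DecidablePred p]
    (hT : T ⊆ s) : s.filter p = T ↔ ∀ i ∈ s, (p i ↔ i ∈ T) := by
  constructor
  · rintro rfl i hi
    simp [hi]
  · intro h
    ext i
    refine ⟨fun hi => (h i (mem_filter.1 hi).1).1 (mem_filter.1 hi).2, fun hi => ?_⟩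
    exact mem_filter.2 ⟨hT hi, (h i (hT hi)).2 hi⟩

section Measure

variable {Ω : Type*} [MeasurableSpace Ω] {P : Measure Ω}

theorem measure_setOf_mem_eq_tsum {N : Ω → ℕ} (hN : Measurable N) {S : ℕ → Set Ω}
    (hS : ∀ n, MeasurableSet (S n)) :
    P {ω | ω ∈ S (N ω)} = ∑' n, P ({ω | N ω = n} ∩ S n) := by
  have hunion : {ω | ω ∈ S (N ω)} = ⋃ n, {ω | N ω = n} ∩ S n := by
    ext ω
    simp
  rw [hunion]
  exact measure_iUnion
    (fun n n' hne => Set.disjoint_left.2 fun ω h h' => hne (h.1.symm.trans h'.1))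
    fun n => (hN (measurableSet_singleton n)).inter (hS n)

theorem measure_le_eq_ofReal_one_sub_sum [IsProbabilityMeasure P] {Y : Ω → ℕ}
    (hY : Measurable Y) {f : ℕ → ℝ} (hf : ∀ j, 0 ≤ f j)
    (hlaw : ∀ j, P {ω | Y ω = j} = ENNReal.ofReal (f j)) (k : ℕ) :
    P {ω | k ≤ Y ω} = ENNReal.ofReal (1 - ∑ j ∈ range k, f j) := by
  have hlt : P {ω | Y ω < k} = ENNReal.ofReal (∑ j ∈ range k, f j) := by
    rw [ENNReal.ofReal_sum_of_nonneg fun j _ => hf j, ← sum_congr rfl fun j _ => hlaw j]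
    refine ((sum_measure_preimage_singleton (range k) fun j _ =>
      hY (measurableSet_singleton j)).trans ?_).symm
    rw [coe_range]
    rfl
  rw [show {ω | k ≤ Y ω} = {ω | Y ω < k}ᶜ by ext; simp,
    prob_compl_eq_one_sub (measurableSet_lt hY measurable_const), hlt,
    ENNReal.ofReal_sub _ (sum_nonneg fun j _ => hf j), ENNReal.ofReal_one]

theorem measure_preimage_eq_ofReal_setIntegral_div {E : Type*} [MeasurableSpace E]
    {μ : Measure E} {X : Ω → E} (hX : Measurable X)
    {Λ : E → ℝ} (hΛ : Integrable Λ μ) (hΛnonneg : ∀ᵐ s ∂μ, 0 ≤ Λ s) {C : ℝ} (hC : 0 ≤ C)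
    (hlaw : P.map X = μ.withDensity fun s => ENNReal.ofReal (Λ s / C))
    {B : Set E} (hB : MeasurableSet B) :
    P (X ⁻¹' B) = ENNReal.ofReal ((∫ s in B, Λ s ∂μ) / C) := by
  rw [← Measure.map_apply hX hB, hlaw, withDensity_apply _ hB,
    ← ofReal_integral_eq_lintegral_ofReal (hΛ.div_const C).restrict
      (ae_restrict_of_ae (hΛnonneg.mono fun s hs => div_nonneg hs hC)), integral_div]

end Measure

theorem mem_closedBall_of_add_mem_closedBall {E : Type*} [SeminormedAddCommGroup E]
    {x e s : E} {r m : ℝ} (he : ‖e‖ ≤ m) (h : x + e ∈ closedBall s r) :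
    x ∈ closedBall s (r + m) := by
  rw [mem_closedBall] at h ⊢
  calc dist x s ≤ dist x (x + e) + dist (x + e) s := dist_triangle _ _ _
    _ ≤ r + m := by rw [dist_self_add_right]; linarith

open scoped Classical in
theorem card_filter_add_mem_closedBall_le {E : Type*} [SeminormedAddCommGroup E]
    {x e : ℕ → E} {m : ℝ} (he : ∀ i, ‖e i‖ ≤ m) (s : E) (r : ℝ) (n : ℕ) :
    #((range n).filter fun i => x i + e i ∈ closedBall s r) ≤
      #((range n).filter fun i => x i ∈ closedBall s (r + m)) :=
  card_le_card <| monotone_filter_right _ fun i _ => mem_closedBall_of_add_mem_closedBall (he i)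

section Thinning

variable {Ω E : Type}

open scoped Classical in
noncomputable def countIn (x : ℕ → Ω → E) (B : Set E) (n : ℕ) (ω : Ω) : ℕ :=
  #((range n).filter fun i => x i ω ∈ B)

open scoped Classical in
theorem setOf_filter_eq {x : ℕ → Ω → E} {B : Set E} {n : ℕ} {T : Finset ℕ}
    (hT : T ⊆ range n) :
    {ω | (range n).filter (fun i => x i ω ∈ B) = T} =
      ⋂ i ∈ range n, x i ⁻¹' (if i ∈ T then B else Bᶜ) := by
  ext ω
  simp only [Set.mem_ofPred_eq, filter_eq_iff_of_subset hT, Set.mem_iInter, Set.mem_preimage]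
  refine forall₂_congr fun i _ => ?_
  split_ifs with hi <;> simp [hi]

open scoped Classical in
theorem setOf_countIn_eq (x : ℕ → Ω → E) (B : Set E) (n j : ℕ) :
    {ω | countIn x B n ω = j} =
      ⋃ T ∈ powersetCard j (range n), {ω | (range n).filter (fun i => x i ω ∈ B) = T} := by
  ext ω
  simp [countIn]

variable [MeasurableSpace Ω] [MeasurableSpace E]

theorem measurable_countIn {x : ℕ → Ω → E} (hx : ∀ i, Measurable (x i)) {B : Set E}
    (hB : MeasurableSet B) (n : ℕ) : Measurable (countIn x B n) := by
  unfold countIn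
  simp only [card_filter]
  exact Finset.measurable_sum _ fun i _ =>
    Measurable.ite (hx i hB) measurable_const measurable_const

theorem measurable_countIn_apply {N : Ω → ℕ} (hN : Measurable N) {x : ℕ → Ω → E}
    (hx : ∀ i, Measurable (x i)) {B : Set E} (hB : MeasurableSet B) :
    Measurable fun ω => countIn x B (N ω) ω :=
  (measurable_from_prod_countable_right (f := fun q : ℕ × Ω => countIn x B q.1 q.2)
    (measurable_countIn hx hB)).comp (hN.prodMk measurable_id)

variable {P : Measure Ω} {N : Ω → ℕ} {x : ℕ → Ω → E}

theorem measure_eq_inter_biInter_preimage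
    (hindep : iIndepFun (m := famType.instMeasurableSpace _) (famFun N x) P)
    {A : ℕ → Set E} (hA : ∀ i, MeasurableSet (A i)) (n : ℕ) (s : Finset ℕ) :
    P ({ω | N ω = n} ∩ ⋂ i ∈ s, x i ⁻¹' A i) =
      P {ω | N ω = n} * ∏ i ∈ s, P (x i ⁻¹' A i) := by
  let g : Option ℕ → Set Ω := fun o => o.elim {ω | N ω = n} fun i => x i ⁻¹' A i
  have hg : ∀ o ∈ insert none (s.image some), MeasurableSet[
      (famType.instMeasurableSpace E o).comap (famFun N x o)] (g o) := by
    rintro (_ | i) _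
    · exact ⟨{n}, measurableSet_singleton n, rfl⟩
    · exact ⟨A i, hA i, rfl⟩
  have hnone : none ∉ s.image some := by simp
  simpa [g, set_biInter_insert, prod_insert hnone] using hindep.meas_biInter hg

variable [IsProbabilityMeasure P]

open scoped Classical in
theorem measure_inter_setOf_filter_eq (hx : ∀ i, Measurable (x i))
    (hindep : iIndepFun (m := famType.instMeasurableSpace _) (famFun N x) P)
    {B : Set E} (hB : MeasurableSet B) {q : ℝ≥0∞} (hq : ∀ i, P (x i ⁻¹' B) = q)
    {n : ℕ} {T : Finset ℕ} (hT : T ⊆ range n) :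
    P ({ω | N ω = n} ∩ {ω | (range n).filter (fun i => x i ω ∈ B) = T}) =
      P {ω | N ω = n} * (q ^ #T * (1 - q) ^ (n - #T)) := by
  have hmarginal (i : ℕ) :
      P (x i ⁻¹' (if i ∈ T then B else Bᶜ)) = if i ∈ T then q else 1 - q := by
    split_ifs
    · exact hq i
    · rw [Set.preimage_compl, prob_compl_eq_one_sub (hx i hB), hq i]
  rw [setOf_filter_eq hT, measure_eq_inter_biInter_preimage hindep
    (fun i => by split_ifs; exacts [hB, hB.compl]), prod_congr rfl fun i _ => hmarginal i,
    prod_ite, prod_const, prod_const, filter_mem_eq_inter, inter_eq_right.2 hT, filter_not,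
    filter_mem_eq_inter, inter_eq_right.2 hT, card_sdiff_of_subset hT, card_range]

open scoped Classical in
theorem measure_inter_countIn_eq (hN : Measurable N) (hx : ∀ i, Measurable (x i))
    (hindep : iIndepFun (m := famType.instMeasurableSpace _) (famFun N x) P)
    {B : Set E} (hB : MeasurableSet B) {q : ℝ≥0∞} (hq : ∀ i, P (x i ⁻¹' B) = q) (n j : ℕ) :
    P ({ω | N ω = n} ∩ {ω | countIn x B n ω = j}) =
      P {ω | N ω = n} * (n.choose j * (q ^ j * (1 - q) ^ (n - j))) := by
  have hmeas : ∀ T ∈ powersetCard j (range n),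
      MeasurableSet ({ω | N ω = n} ∩ {ω | (range n).filter (fun i => x i ω ∈ B) = T}) := by
    intro T hT
    rw [setOf_filter_eq (mem_powersetCard.1 hT).1]
    exact (hN (measurableSet_singleton n)).inter <| Finset.measurableSet_biInter _ fun i _ =>
      hx i (by split_ifs; exacts [hB, hB.compl])
  have hdisj : Set.PairwiseDisjoint (powersetCard j (range n) : Set (Finset ℕ))
      fun T => {ω | N ω = n} ∩ {ω | (range n).filter (fun i => x i ω ∈ B) = T} :=
    fun T _ T' _ hne => Set.disjoint_left.2 fun ω h h' => hne (h.2.symm.trans h'.2)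
  have hpattern : ∀ T ∈ powersetCard j (range n),
      P ({ω | N ω = n} ∩ {ω | (range n).filter (fun i => x i ω ∈ B) = T}) =
        P {ω | N ω = n} * (q ^ j * (1 - q) ^ (n - j)) := by
    intro T hT
    rw [mem_powersetCard] at hT
    rw [measure_inter_setOf_filter_eq hx hindep hB hq hT.1, hT.2]
  rw [setOf_countIn_eq, Set.inter_iUnion₂, measure_biUnion_finset hdisj hmeas,
    sum_congr rfl hpattern, sum_const, card_powersetCard, card_range, nsmul_eq_mul,
    mul_left_comm]

theorem measure_countIn_eq_poisson (hN : Measurable N) (hx : ∀ i, Measurable (x i))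
    (hindep : iIndepFun (m := famType.instMeasurableSpace _) (famFun N x) P)
    {B : Set E} (hB : MeasurableSet B) {C p : ℝ} (hC : 0 ≤ C) (hp0 : 0 ≤ p) (hp1 : p ≤ 1)
    (hNlaw : ∀ n : ℕ, P {ω | N ω = n} = ENNReal.ofReal (Real.exp (-C) * C ^ n / n !))
    (hq : ∀ i, P (x i ⁻¹' B) = ENNReal.ofReal p) (j : ℕ) :
    P {ω | countIn x B (N ω) ω = j} =
      ENNReal.ofReal (Real.exp (-(C * p)) * (C * p) ^ j / j !) := by
  have hterm (n : ℕ) : P ({ω | N ω = n} ∩ {ω | countIn x B n ω = j}) =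
      ENNReal.ofReal (Real.exp (-C) * C ^ n / n ! *
        (n.choose j * (p ^ j * (1 - p) ^ (n - j)))) := by
    rw [measure_inter_countIn_eq hN hx hindep hB hq, hNlaw, ENNReal.ofReal_mul (by positivity),
      ENNReal.ofReal_mul (by positivity), ENNReal.ofReal_mul (by positivity),
      ENNReal.ofReal_pow hp0, ENNReal.ofReal_pow (sub_nonneg.2 hp1), ENNReal.ofReal_natCast,
      ENNReal.ofReal_sub _ hp0, ENNReal.ofReal_one]
  have hthin := hasSum_poisson_mul_binomial C p j
  refine (measure_setOf_mem_eq_tsum hN (S := fun n => {ω | countIn x B n ω = j})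
    fun n => measurable_countIn hx hB n (measurableSet_singleton j)).trans ?_
  rw [tsum_congr hterm, ← ENNReal.ofReal_tsum_of_nonneg (fun n => by positivity) hthin.summable,
    hthin.tsum_eq]

end Thinning

end BddErr

open scoped Classical in
theorem k_contact_distance_bound_bounded_error_general
    {d : ℕ}
    (Λ : EuclideanSpace ℝ (Fin d) → ℝ) (hΛpos : ∀ s, 0 ≤ Λ s)
    (hΛint : Integrable Λ volume) (hCpos : 0 < ∫ s, Λ s ∂volume)
    {Ω : Type} [MeasurableSpace Ω] (P : Measure Ω) [IsProbabilityMeasure P]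
    (N : Ω → ℕ) (hNmeas : Measurable N)
    (x : ℕ → Ω → EuclideanSpace ℝ (Fin d)) (hxmeas : ∀ i, Measurable (x i))
    -- `N` has the Poisson law with mean `C = ∫ Λ`
    (hN : ∀ n : ℕ, P {ω | N ω = n} =
      ENNReal.ofReal (Real.exp (-(∫ s, Λ s ∂volume)) * (∫ s, Λ s ∂volume) ^ n / n !))
    -- the `x i` are identically distributed with density `Λ / C` w.r.t. Lebesgue measure
    (hx : ∀ i, Measure.map (x i) P =
      volume.withDensity (fun s => ENNReal.ofReal (Λ s / ∫ t, Λ t ∂volume)))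
    -- `N` and all the `x i` are mutually independent
    (hindep : iIndepFun (m := BddErr.famType.instMeasurableSpace _) (BddErr.famFun N x) P)
    -- error vectors, almost surely bounded in norm by `m`, with no independence assumption
    (ε : ℕ → Ω → EuclideanSpace ℝ (Fin d)) (m : ℝ)
    (hε : ∀ i, ∀ᵐ ω ∂P, ‖ε i ω‖ ≤ m)
    (s₀ : EuclideanSpace ℝ (Fin d)) (r : ℝ) (k : ℕ) :
    P {ω | k ≤ ((Finset.range (N ω)).filter
        fun i => x i ω + ε i ω ∈ closedBall s₀ r).card} ≤
      ENNReal.ofReal (1 - ∑ j ∈ Finset.range k,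
        Real.exp (-(∫ s in closedBall s₀ (r + m), Λ s ∂volume)) *
          (∫ s in closedBall s₀ (r + m), Λ s ∂volume) ^ j / j !) := by
  set C := ∫ s, Λ s ∂volume
  set M := ∫ s in closedBall s₀ (r + m), Λ s ∂volume
  have hB : MeasurableSet (closedBall s₀ (r + m)) := measurableSet_closedBall
  have hM : 0 ≤ M := setIntegral_nonneg hB fun s _ => hΛpos s
  have hMC : M ≤ C := setIntegral_le_integral hΛint (.of_forall hΛpos)
  have hq (i : ℕ) : P (x i ⁻¹' closedBall s₀ (r + m)) = ENNReal.ofReal (M / C) :=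
    BddErr.measure_preimage_eq_ofReal_setIntegral_div (hxmeas i) hΛint (ae_of_all _ hΛpos)
      hCpos.le (hx i) hB
  have hlaw := BddErr.measure_countIn_eq_poisson hNmeas hxmeas hindep hB hCpos.le
    (div_nonneg hM hCpos.le) ((div_le_one hCpos).2 hMC) hN hq
  simp only [mul_div_cancel₀ M hCpos.ne'] at hlaw
  calc _ ≤ P {ω | k ≤ BddErr.countIn x (closedBall s₀ (r + m)) (N ω) ω} := by
        refine measure_mono_ae ?_
        filter_upwards [ae_all_iff.2 hε] with ω hεω hkω
        exact hkω.trans (BddErr.card_filter_add_mem_closedBall_le hεω s₀ r (N ω))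
    _ = _ := BddErr.measure_le_eq_ofReal_one_sub_sum
        (BddErr.measurable_countIn_apply hNmeas hxmeas hB) (fun j => by positivity) hlaw k

open scoped Classical in
/-- **Bounded-error corollary of the main bound** (Statement 14): for the sequence
representation of a nonhomogeneous Poisson process with intensity `Λ` (Poisson count `N` with
mean `C = ∫ Λ`, i.i.d. locations with density `Λ / C`, mutually independent), if the error
vectors `ε i` satisfy `‖ε i‖ ≤ m` almost surely (no independence assumed), then the
probability of at least `k` noisy points `y i = x i + ε i` within radius `r` of `s₀` is at
most `1 - ∑_{j<k} e^{-M(r+m)} M(r+m)^j / j!` where `M(ρ) = ∫_{B(s₀,ρ)} Λ`. -/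
theorem k_contact_distance_bound_bounded_error
    {d : ℕ} (hd : 1 ≤ d)
    (Λ : EuclideanSpace ℝ (Fin d) → ℝ) (hΛmeas : Measurable Λ) (hΛpos : ∀ s, 0 ≤ Λ s)
    (hΛint : Integrable Λ volume) (hCpos : 0 < ∫ s, Λ s ∂volume)
    {Ω : Type} [MeasurableSpace Ω] (P : Measure Ω) [IsProbabilityMeasure P]
    (N : Ω → ℕ) (hNmeas : Measurable N)
    (x : ℕ → Ω → EuclideanSpace ℝ (Fin d)) (hxmeas : ∀ i, Measurable (x i))
    -- `N` has the Poisson law with mean `C = ∫ Λ`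
    (hN : ∀ n : ℕ, P {ω | N ω = n} =
      ENNReal.ofReal (Real.exp (-(∫ s, Λ s ∂volume)) * (∫ s, Λ s ∂volume) ^ n / n !))
    -- the `x i` are identically distributed with density `Λ / C` w.r.t. Lebesgue measure
    (hx : ∀ i, Measure.map (x i) P =
      volume.withDensity (fun s => ENNReal.ofReal (Λ s / ∫ t, Λ t ∂volume)))
    -- `N` and all the `x i` are mutually independent
    (hindep : iIndepFun (m := BddErr.famType.instMeasurableSpace _) (BddErr.famFun N x) P)
    -- error vectors, almost surely bounded in norm by `m`, with no independence assumption
    (ε : ℕ → Ω → EuclideanSpace ℝ (Fin d)) (m : ℝ) (hm : 0 ≤ m)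
    (hε : ∀ i, ∀ᵐ ω ∂P, ‖ε i ω‖ ≤ m)
    (s₀ : EuclideanSpace ℝ (Fin d)) (r : ℝ) (hr : 0 ≤ r) (k : ℕ) (hk : 1 ≤ k) :
    P {ω | k ≤ ((Finset.range (N ω)).filter
        fun i => x i ω + ε i ω ∈ closedBall s₀ r).card} ≤
      ENNReal.ofReal (1 - ∑ j ∈ Finset.range k,
        Real.exp (-(∫ s in closedBall s₀ (r + m), Λ s ∂volume)) *
          (∫ s in closedBall s₀ (r + m), Λ s ∂volume) ^ j / j !) :=
  k_contact_distance_bound_bounded_error_general Λ hΛpos hΛint hCpos P N hNmeas x hxmeas hN hx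
    hindep ε m hε s₀ r k
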